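/- Let A ∈ ℝ^{m×m} be positive definite, meaning xᵀAx > 0 for every nonzero x ∈ ℝ^m (A need not be symmetric), let B ∈ ℝ^{m×n} be rank deficient (rank B < n), and let α ≥ 0, β > 0. Then the pseudo-spectral radius of the MGSSP iteration matrix is less than one: if λ ∈ ℂ with λ ≠ 1 and there exists a nonzero w ∈ ℂ^{m+n} with Q(α,β)w = λ P(α,β)w, then |λ| < 1. Hence the MGSSP iteration method is semi-convergent for the singular saddle point problem for all α ≥ 0 and β > 0. -/

import Mathlib

/-! With `w = (u, v)` and `μ = (1 - 2λ) / (1 - λ)` the eigen-equation reads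
`α u + μ (A u + B v) = 0`, `β v = μ Bᴴ u`. Pairing the first equation with `u` and eliminating
`v` by the second gives `‖Bᴴ u‖² μ² + β (u* A u) μ + α β ‖u‖² = 0`; since `Re (u* A u) > 0` and the
other two coefficients are nonnegative reals, `Re μ ≤ 0`. Inverting the Möbius map,
`λ = (1 - μ) / (2 - μ)`, and `|1 - μ| < |2 - μ|` when `Re μ < 3/2`. -/

open Matrix

/-- The MGSSP splitting matrix `P(α,β) = [[αI+2A, 2B], [−2Bᵀ, βI]]`. -/
noncomputable def Pmat {m n : ℕ} (A : Matrix (Fin m) (Fin m) ℝ) (B : Matrix (Fin m) (Fin n) ℝ)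
    (α β : ℝ) : Matrix (Fin m ⊕ Fin n) (Fin m ⊕ Fin n) ℝ :=
  fromBlocks (α • 1 + (2 : ℝ) • A) ((2 : ℝ) • B) (-((2 : ℝ) • Bᵀ)) (β • 1)

/-- The MGSSP splitting matrix `Q(α,β) = [[αI+A, B], [−Bᵀ, βI]]`. -/
noncomputable def Qmat {m n : ℕ} (A : Matrix (Fin m) (Fin m) ℝ) (B : Matrix (Fin m) (Fin n) ℝ)
    (α β : ℝ) : Matrix (Fin m ⊕ Fin n) (Fin m ⊕ Fin n) ℝ :=
  fromBlocks (α • 1 + A) B (-Bᵀ) (β • 1)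

open scoped ComplexOrder

theorem Complex.re_nonpos_of_quadratic_eq_zero {a b c μ : ℂ} (hb : 0 ≤ b) (hc : 0 ≤ c)
    (ha : 0 < a.re) (h : b * μ ^ 2 + a * μ + c = 0) : μ.re ≤ 0 := by
  obtain ⟨hb, hb'⟩ := Complex.nonneg_iff.mp hb
  obtain ⟨hc, hc'⟩ := Complex.nonneg_iff.mp hc
  by_contra! hμ
  have hre := congrArg Complex.re h
  have him := congrArg Complex.im h
  simp only [Complex.add_re, Complex.add_im, Complex.mul_re, Complex.mul_im, pow_two,
    ← hb', ← hc', Complex.zero_re, Complex.zero_im] at hre him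
  have hnormSq : 0 < μ.re ^ 2 + μ.im ^ 2 := by positivity
  -- the real part of `(b μ² + a μ + c) · conj μ`
  have : b.re * μ.re * (μ.re ^ 2 + μ.im ^ 2) + a.re * (μ.re ^ 2 + μ.im ^ 2)
      + c.re * μ.re = 0 := by
    linear_combination μ.re * hre + μ.im * him
  nlinarith [mul_pos ha hnormSq, mul_nonneg (mul_nonneg hb hμ.le) hnormSq.le, mul_nonneg hc hμ.le]

theorem Complex.norm_one_sub_div_two_sub_lt_one {μ : ℂ} (hμ : μ.re ≤ 0) :
    ‖(1 - μ) / (2 - μ)‖ < 1 := by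
  have hpos : 0 < ‖2 - μ‖ := norm_pos_iff.mpr fun h => by
    rw [← sub_eq_zero.mp h] at hμ
    norm_num at hμ
  rw [norm_div, div_lt_one hpos]
  refine lt_of_pow_lt_pow_left₀ 2 (norm_nonneg _) ?_
  simp only [Complex.sq_norm, Complex.normSq_apply, Complex.sub_re, Complex.sub_im,
    Complex.one_re, Complex.one_im, Complex.re_ofNat, Complex.im_ofNat]
  nlinarith

theorem Matrix.re_star_dotProduct_map_ofReal_mulVec {k : Type*} [Fintype k]
    (A : Matrix k k ℝ) (u : k → ℂ) :
    (star u ⬝ᵥ (A.map Complex.ofReal *ᵥ u)).re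
      = (Complex.re ∘ u) ⬝ᵥ (A *ᵥ (Complex.re ∘ u))
        + (Complex.im ∘ u) ⬝ᵥ (A *ᵥ (Complex.im ∘ u)) := by
  simp only [dotProduct, mulVec, Complex.re_sum, map_apply, Complex.mul_re,
    Complex.mul_im, Function.comp_apply, Pi.star_apply, Complex.star_def, Complex.conj_re,
    Complex.conj_im, Complex.ofReal_re, Complex.ofReal_im, Finset.mul_sum, ← Finset.sum_add_distrib]
  refine Finset.sum_congr rfl fun i _ => Finset.sum_congr rfl fun j _ => ?_
  ring

theorem Matrix.re_star_dotProduct_map_ofReal_mulVec_pos {k : Type*} [Fintype k]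
    {A : Matrix k k ℝ} (hA : ∀ x : k → ℝ, x ≠ 0 → 0 < x ⬝ᵥ (A *ᵥ x)) {u : k → ℂ} (hu : u ≠ 0) :
    0 < (star u ⬝ᵥ (A.map Complex.ofReal *ᵥ u)).re := by
  have hA' : ∀ x : k → ℝ, 0 ≤ x ⬝ᵥ (A *ᵥ x) := fun x => by
    rcases eq_or_ne x 0 with rfl | hx
    · simp
    · exact (hA x hx).le
  rw [re_star_dotProduct_map_ofReal_mulVec]
  by_cases hre : Complex.re ∘ u = 0
  · have him : Complex.im ∘ u ≠ 0 := fun him =>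
      hu <| funext fun i => Complex.ext (congrFun hre i) (congrFun him i)
    exact add_pos_of_nonneg_of_pos (hA' _) (hA _ him)
  · exact add_pos_of_pos_of_nonneg (hA _ hre) (hA' _)

section SaddlePoint

variable {m n : Type*} [Fintype m] [Fintype n] {A : Matrix m m ℂ} {B : Matrix m n ℂ} {α β : ℝ}

theorem re_nonpos_of_saddle_point_eq
    (hA : ∀ u : m → ℂ, u ≠ 0 → 0 < (star u ⬝ᵥ (A *ᵥ u)).re) (hα : 0 ≤ α) (hβ : 0 < β)
    {μ : ℂ} {u : m → ℂ} {v : n → ℂ} (hu : u ≠ 0)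
    (h₁ : (α : ℂ) • u + μ • (A *ᵥ u + B *ᵥ v) = 0) (h₂ : (β : ℂ) • v = μ • (Bᴴ *ᵥ u)) :
    μ.re ≤ 0 := by
  set g := Bᴴ *ᵥ u
  have hBv : star u ⬝ᵥ (B *ᵥ v) = star g ⬝ᵥ v := by
    rw [star_mulVec, conjTranspose_conjTranspose, dotProduct_mulVec]
  have e₁ := congrArg (star u ⬝ᵥ ·) h₁
  have e₂ := congrArg (star g ⬝ᵥ ·) h₂
  simp only [dotProduct_add, dotProduct_smul, smul_eq_mul, dotProduct_zero, hBv] at e₁ e₂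
  refine Complex.re_nonpos_of_quadratic_eq_zero (a := β * (star u ⬝ᵥ (A *ᵥ u)))
    (c := α * β * (star u ⬝ᵥ u)) (dotProduct_star_self_nonneg g) ?_ ?_
    (by linear_combination (β : ℂ) * e₁ - μ * e₂)
  · exact mul_nonneg
      (mul_nonneg (Complex.zero_le_real.mpr hα) (Complex.zero_le_real.mpr hβ.le))
      (dotProduct_star_self_nonneg u)
  · simpa only [Complex.re_ofReal_mul] using mul_pos hβ (hA u hu)

theorem norm_lt_one_of_saddle_point_pencil_eq [DecidableEq m] [DecidableEq n]
    (hA : ∀ u : m → ℂ, u ≠ 0 → 0 < (star u ⬝ᵥ (A *ᵥ u)).re)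
    (hα : 0 ≤ α) (hβ : 0 < β) {lam : ℂ} (hlam : lam ≠ 1) {w : m ⊕ n → ℂ} (hw : w ≠ 0)
    (h : fromBlocks ((α : ℂ) • 1 + A) B (-Bᴴ) ((β : ℂ) • 1) *ᵥ w
      = lam • (fromBlocks ((α : ℂ) • 1 + (2 : ℂ) • A) ((2 : ℂ) • B) (-((2 : ℂ) • Bᴴ))
          ((β : ℂ) • 1) *ᵥ w)) :
    ‖lam‖ < 1 := by
  set u := w ∘ Sum.inl
  set v := w ∘ Sum.inr
  have h1lam : 1 - lam ≠ 0 := sub_ne_zero.mpr (Ne.symm hlam)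
  set μ := (1 - 2 * lam) / (1 - lam) with hμ
  rw [fromBlocks_mulVec, fromBlocks_mulVec] at h
  have hμ' : (1 - lam) * μ = 1 - 2 * lam := mul_div_cancel₀ _ h1lam
  have hl : (α : ℂ) • u + A *ᵥ u + B *ᵥ v
      = lam • ((α : ℂ) • u + (2 : ℂ) • A *ᵥ u + (2 : ℂ) • B *ᵥ v) := by
    funext i
    simpa only [Sum.elim_inl, Pi.smul_apply, add_mulVec, smul_mulVec, one_mulVec]
      using congrFun h (Sum.inl i)
  have hr : -(Bᴴ *ᵥ u) + (β : ℂ) • v = lam • (-((2 : ℂ) • Bᴴ *ᵥ u) + (β : ℂ) • v) := by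
    funext i
    simpa only [Sum.elim_inr, Pi.smul_apply, neg_mulVec, smul_mulVec, one_mulVec]
      using congrFun h (Sum.inr i)
  have h₁ : (α : ℂ) • u + μ • (A *ᵥ u + B *ᵥ v) = 0 := by
    refine smul_right_injective _ h1lam ?_
    simp only [smul_add, smul_smul, hμ', smul_zero]
    linear_combination (norm := module) hl
  have h₂ : (β : ℂ) • v = μ • (Bᴴ *ᵥ u) := by
    refine smul_right_injective _ h1lam ?_
    simp only [smul_smul, hμ']
    linear_combination (norm := module) hr
  have hu : u ≠ 0 := by
    intro hu
    have hv : v = 0 := by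
      simpa [hu, hβ.ne'] using h₂
    exact hw (funext fun x => x.rec (congrFun hu) (congrFun hv))
  have hlam_eq : lam = (1 - μ) / (2 - μ) := by
    rw [hμ]; field_simp; ring
  rw [hlam_eq]
  exact Complex.norm_one_sub_div_two_sub_lt_one (re_nonpos_of_saddle_point_eq hA hα hβ hu h₁ h₂)

end SaddlePoint

theorem Matrix.map_ofReal_smul {k l : Type*} (r : ℝ) (M : Matrix k l ℝ) :
    (r • M).map Complex.ofReal = (r : ℂ) • M.map Complex.ofReal :=
  Matrix.map_smulₛₗ _ _ _ (fun _ => Complex.ofReal_mul _ _) M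

theorem Matrix.map_ofReal_transpose {k l : Type*} (M : Matrix k l ℝ) :
    Mᵀ.map Complex.ofReal = (M.map Complex.ofReal)ᴴ := by
  rw [← conjTranspose_eq_transpose_of_trivial, conjTranspose_map]
  exact fun x => (Complex.conj_ofReal x).symm

theorem Pmat_map_ofReal {m n : ℕ} (A : Matrix (Fin m) (Fin m) ℝ) (B : Matrix (Fin m) (Fin n) ℝ)
    (α β : ℝ) :
    (Pmat A B α β).map Complex.ofReal
      = fromBlocks ((α : ℂ) • 1 + (2 : ℂ) • A.map Complex.ofReal) ((2 : ℂ) • B.map Complex.ofReal)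
          (-((2 : ℂ) • (B.map Complex.ofReal)ᴴ)) ((β : ℂ) • 1) := by
  simp [Pmat, fromBlocks_map, Matrix.map_add, Matrix.map_neg, map_ofReal_smul,
    map_ofReal_transpose]

theorem Qmat_map_ofReal {m n : ℕ} (A : Matrix (Fin m) (Fin m) ℝ) (B : Matrix (Fin m) (Fin n) ℝ)
    (α β : ℝ) :
    (Qmat A B α β).map Complex.ofReal
      = fromBlocks ((α : ℂ) • 1 + A.map Complex.ofReal) (B.map Complex.ofReal)
          (-(B.map Complex.ofReal)ᴴ) ((β : ℂ) • 1) := by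
  simp [Qmat, fromBlocks_map, Matrix.map_add, Matrix.map_neg, map_ofReal_smul,
    map_ofReal_transpose]

theorem mgssp_semiconvergence_general {m n : ℕ}
    (A : Matrix (Fin m) (Fin m) ℝ) (B : Matrix (Fin m) (Fin n) ℝ)
    (hA : ∀ x : Fin m → ℝ, x ≠ 0 → 0 < x ⬝ᵥ (A *ᵥ x))
    (α β : ℝ) (hα : 0 ≤ α) (hβ : 0 < β)
    (lam : ℂ) (hlam : lam ≠ 1)
    (w : Fin m ⊕ Fin n → ℂ) (hw : w ≠ 0)
    (heig : (Qmat A B α β).map Complex.ofReal *ᵥ w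
        = lam • ((Pmat A B α β).map Complex.ofReal *ᵥ w)) :
    ‖lam‖ < 1 := by
  rw [Qmat_map_ofReal, Pmat_map_ofReal] at heig
  exact norm_lt_one_of_saddle_point_pencil_eq
    (fun _ => re_star_dotProduct_map_ofReal_mulVec_pos hA) hα hβ hlam hw heig

/-- Lemma 4.3 / Theorem 4.1: for the singular saddle point problem (rank-deficient
`B`), every eigenvalue of the MGSSP iteration matrix different from `1` has modulus
less than one, i.e. the pseudo-spectral radius of `T(α,β)` is less than `1`, so the
MGSSP iteration method is semi-convergent for all `α ≥ 0` and `β > 0`. -/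
theorem mgssp_semiconvergence {m n : ℕ}
    (A : Matrix (Fin m) (Fin m) ℝ) (B : Matrix (Fin m) (Fin n) ℝ)
    (hA : ∀ x : Fin m → ℝ, x ≠ 0 → 0 < x ⬝ᵥ (A *ᵥ x))
    (hB : B.rank < n)
    (α β : ℝ) (hα : 0 ≤ α) (hβ : 0 < β)
    (lam : ℂ) (hlam : lam ≠ 1)
    (w : Fin m ⊕ Fin n → ℂ) (hw : w ≠ 0)
    (heig : (Qmat A B α β).map Complex.ofReal *ᵥ w
        = lam • ((Pmat A B α β).map Complex.ofReal *ᵥ w)) :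
    ‖lam‖ < 1 :=
  mgssp_semiconvergence_general A B hA α β hα hβ lam hlam w hw heig
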